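/- arXiv:2308.00315 — 5 statements merged into one kernel-verified Lean document; each statement's English description precedes it below -/
import Mathlib

section
/- Let n ≥ 1 and 1 ≤ k ≤ n be integers. Define t_{m} = C(n-1, k-1)^m · ∏_{ℓ=1}^{m-1} C((ℓ+1)n - 1, n-1) for m ≥ 0 (with the empty product equal to 1). Then for every m ≥ 0, ∑_{j=0}^{m} t_j/(j·n)! · t_{m-j}/((m-j)·n)! = (1/m!) · (2/n! · C(n-1, k-1))^m. -/
/-!
The product in `t m` is the uniform Bell number `(m n)! / (n!^m m!)`, so
`t m / (m n)! = x^m / m!` with `x = C(n-1, k-1) / n!`. The sum is then the Cauchy product of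
two exponential series, i.e. `(x + x)^m / m!` by the binomial theorem.
-/

open Finset Nat

theorem Nat.prod_Icc_choose_eq_uniformBell (m n : ℕ) :
    ∏ ℓ ∈ Icc 1 (m - 1), ((ℓ + 1) * n - 1).choose (n - 1) = m.uniformBell n := by
  rcases m with _ | m
  · simp [uniformBell_zero_left]
  · rw [uniformBell_eq, prod_range_succ', add_tsub_cancel_right, ← Ico_add_one_right_eq_Icc,
      prod_Ico_eq_prod_range, add_tsub_cancel_right]
    simp [add_comm, add_mul]

theorem Nat.uniformBell_div_factorial {K : Type*} [Field K] [CharZero K] (m : ℕ) {n : ℕ}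
    (hn : n ≠ 0) : (m.uniformBell n : K) / (m * n)! = 1 / ((n ! : K) ^ m * m !) := by
  have h := uniformBell_mul_eq m hn
  have hB : m.uniformBell n ≠ 0 := fun h0 => (m * n).factorial_ne_zero (by simp [← h, h0])
  rw [← h]
  push_cast
  field_simp

theorem sum_range_pow_div_factorial_mul {K : Type*} [Field K] [CharZero K] (x y : K) (m : ℕ) :
    ∑ j ∈ range (m + 1), x ^ j / j ! * (y ^ (m - j) / (m - j)!) = (x + y) ^ m / m ! := by
  rw [add_pow, sum_div]
  refine sum_congr rfl fun j hj => ?_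
  have hm : (m ! : K) ≠ 0 := mod_cast m.factorial_ne_zero
  rw [Nat.cast_choose K (Nat.lt_succ_iff.mp (mem_range.mp hj))]
  field_simp

theorem stmt_0_general (n k : ℕ) (hn : 1 ≤ n)
    (t : ℕ → ℚ)
    (ht : ∀ m, t m = (Nat.choose (n - 1) (k - 1) : ℚ) ^ m *
      ∏ ℓ ∈ Finset.Icc 1 (m - 1), (Nat.choose ((ℓ + 1) * n - 1) (n - 1) : ℚ)) :
    ∀ m, ∑ j ∈ Finset.range (m + 1),
        t j / (Nat.factorial (j * n) : ℚ) * (t (m - j) / (Nat.factorial ((m - j) * n) : ℚ)) =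
      (1 / (Nat.factorial m : ℚ)) *
        ((2 / (Nat.factorial n : ℚ)) * (Nat.choose (n - 1) (k - 1) : ℚ)) ^ m := by
  set x : ℚ := (Nat.choose (n - 1) (k - 1) : ℚ) / (n ! : ℚ)
  have ht_div : ∀ j, t j / (j * n)! = x ^ j / j ! := fun j => by
    rw [ht, ← Nat.cast_prod, Nat.prod_Icc_choose_eq_uniformBell, mul_div_assoc,
      Nat.uniformBell_div_factorial j (by omega), div_pow]
    ring
  intro m
  simp only [ht_div]
  rw [sum_range_pow_div_factorial_mul]
  ring

/-- For n ≥ 1, 1 ≤ k ≤ n, with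
t_m = C(n-1,k-1)^m · ∏_{ℓ=1}^{m-1} C((ℓ+1)n-1, n-1), we have
∑_{j=0}^m t_j/(jn)! · t_{m-j}/((m-j)n)! = (1/m!) · (2/n! · C(n-1,k-1))^m. -/
theorem stmt_0 (n k : ℕ) (hn : 1 ≤ n) (hk1 : 1 ≤ k) (hkn : k ≤ n)
    (t : ℕ → ℚ)
    (ht : ∀ m, t m = (Nat.choose (n - 1) (k - 1) : ℚ) ^ m *
      ∏ ℓ ∈ Finset.Icc 1 (m - 1), (Nat.choose ((ℓ + 1) * n - 1) (n - 1) : ℚ)) :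
    ∀ m, ∑ j ∈ Finset.range (m + 1),
        t j / (Nat.factorial (j * n) : ℚ) * (t (m - j) / (Nat.factorial ((m - j) * n) : ℚ)) =
      (1 / (Nat.factorial m : ℚ)) *
        ((2 / (Nat.factorial n : ℚ)) * (Nat.choose (n - 1) (k - 1) : ℚ)) ^ m :=
  stmt_0_general n k hn t ht
end

section
/- For every integer m ≥ 1, (2^{m-1}·(3m+1)!)/(3^m·(3m-1)·m!) is a positive integer. -/
/-!
Grouping the factors of `(k m)!` by residue mod `k` gives
`(k m)! = k ^ m * m! * ∏_{i < m} (k i + 1) ⋯ (k i + k - 1)`.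
For `k = 3` the factor `3 m - 1` of the denominator is one of the terms of the last block, so the
quotient equals `2 ^ (m - 1) (3 m + 1) (3 m - 2) ∏_{i < m - 1} (3 i + 1) (3 i + 2)`.
-/

open Nat Finset

theorem Nat.factorial_mul_eq_pow_mul_factorial_mul_prod_ascFactorial (j m : ℕ) :
    ((j + 1) * m)! = (j + 1) ^ m * m ! * ∏ i ∈ range m, ((j + 1) * i + 1).ascFactorial j := by
  induction m with
  | zero => simp
  | succ m ih =>
    have hsplit : ((j + 1) * (m + 1))! =
        ((j + 1) * (m + 1)) * (((j + 1) * m)! * ((j + 1) * m + 1).ascFactorial j) := by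
      rw [factorial_mul_ascFactorial, show (j + 1) * (m + 1) = (j + 1) * m + j + 1 by ring,
        factorial_succ]
    rw [hsplit, ih, prod_range_succ, factorial_succ, pow_succ]
    ring

/-- For m ≥ 1, (2^{m-1}·(3m+1)!)/(3^m·(3m-1)·m!) is a positive integer. -/
theorem stmt_3 (m : ℕ) (hm : 1 ≤ m) :
    ∃ d : ℕ, 0 < d ∧
      (d : ℚ) = (2 ^ (m - 1) * Nat.factorial (3 * m + 1) : ℚ) /
        (3 ^ m * (3 * m - 1 : ℕ) * Nat.factorial m) := by
  obtain ⟨n, rfl⟩ := Nat.exists_eq_add_of_le' hm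
  set P := ∏ i ∈ range n, (3 * i + 1).ascFactorial 2
  have hP : 0 < P := prod_pos fun i _ => ascFactorial_pos _ _
  have hfac : 2 ^ n * (3 * (n + 1) + 1)! =
      2 ^ n * (3 * n + 4) * (3 * n + 1) * P * (3 ^ (n + 1) * (3 * n + 2) * (n + 1)!) := by
    rw [factorial_succ, factorial_mul_eq_pow_mul_factorial_mul_prod_ascFactorial 2 (n + 1),
      prod_range_succ, ascFactorial_succ, ascFactorial_succ, ascFactorial_zero]
    ring
  refine ⟨2 ^ n * (3 * n + 4) * (3 * n + 1) * P, by positivity, ?_⟩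
  rw [show n + 1 - 1 = n by omega, show 3 * (n + 1) - 1 = 3 * n + 2 by omega,
    eq_div_iff (by positivity)]
  exact_mod_cast hfac.symm
end

section
/- Define sequences a_{n,k} (for n ≥ 1, 1 ≤ k ≤ n) and b_{n,s,t} (for n ≥ 1, 0 ≤ s,t ≤ n-1) by: a_{n,1} = (n+2)(2n-2)!/(2(n-2)!) for n ≥ 2; a_{n,k} = C(n-k+2, 2)·(2n-k)!/(2(n-k+1)!) for 2 ≤ k ≤ n-1; a_{n,n} = n!; b_{n,0,0} = (2n-2)!/(n-2)!; b_{n,s,0} = b_{n,0,s} = (2n-2-s)!(n-s)/(2(n-1-s)!) for 1 ≤ s ≤ n-2; b_{n,n-1,0} = b_{n,0,n-1} = (n-1)!; and b_{n,s,t} = (2n-2-s-t)!·((n-s-t)(n-s-t+1)+2)/(4·(n-s-t)!) for s,t ≥ 1 with s+t ≤ n-1. Then for n ≥ 3 and 2 ≤ k ≤ n-2, the recursion a_{n,k} = 2·a_{n,k+1} + (k-2)·a_{n-1,k-1} + 2·b_{n,k-1,0} holds. -/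
/-!
Substituting `n = k + d`, every term of the recursion is a rational multiple of `(k + 2d - 1)!`:
`a_{n,k} = (d+2)(k+2d)!/(4 d!)` and `b_{n,k-1,0} = (d+1)(k+2d-1)!/(2 d!)`. After dividing by
`(k+2d-1)!/(4 d!)` the recursion becomes the polynomial identity
`(d+2)(k+2d) = 2d(d+1) + (k-2)(d+2) + 4(d+1)`.
-/

open Nat

/-- `aClosed k d` is the closed form of `a_{k+d,k}`, valid for `2 ≤ k` and `1 ≤ d`. -/
def aClosed (k d : ℕ) : ℚ := (d + 2) * (k + 2 * d)! / (4 * d !)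

/-- `bClosed s d` is the closed form of `b_{s+d+1,s,0}`, valid for `1 ≤ s` and `1 ≤ d`. -/
def bClosed (s d : ℕ) : ℚ := (s + 2 * d)! * (d + 1) / (2 * d !)

theorem aClosed_recursion (j e : ℕ) :
    aClosed (j + 1) (e + 1) =
      2 * aClosed (j + 2) e + ((j : ℚ) - 1) * aClosed j (e + 1) + 2 * bClosed j (e + 1) := by
  have hfac : ((j + 1 + 2 * (e + 1))! : ℚ) = (j + 2 * e + 3) * (j + 2 * (e + 1))! := by
    rw [show j + 1 + 2 * (e + 1) = j + 2 * (e + 1) + 1 by omega, factorial_succ]; push_cast; ring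
  have hsame : j + 2 + 2 * e = j + 2 * (e + 1) := by omega
  simp only [aClosed, bClosed, hfac, hsame, factorial_succ e]
  have : ((j + 2 * (e + 1))! : ℚ) ≠ 0 := by positivity
  push_cast
  field_simp
  ring

section

variable (a : ℕ → ℕ → ℚ) (b : ℕ → ℕ → ℕ → ℚ)

theorem a_eq_aClosed
    (hak : ∀ n k, 2 ≤ k → k ≤ n - 1 → a n k =
      (Nat.choose (n - k + 2) 2 : ℚ) * (Nat.factorial (2 * n - k) : ℚ) /
        (2 * (Nat.factorial (n - k + 1) : ℚ)))
    {k d : ℕ} (hk : 2 ≤ k) (hd : 1 ≤ d) : a (k + d) k = aClosed k d := by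
  rw [hak _ _ hk (by omega), show k + d - k = d by omega, show 2 * (k + d) - k = k + 2 * d by omega,
    cast_choose_two, factorial_succ, aClosed]
  push_cast
  have : (d ! : ℚ) ≠ 0 := by positivity
  field_simp
  ring

theorem b_eq_bClosed
    (hbs0 : ∀ n s, 1 ≤ s → s ≤ n - 2 →
      b n s 0 = (Nat.factorial (2 * n - 2 - s) : ℚ) * ((n : ℚ) - s) /
        (2 * (Nat.factorial (n - 1 - s) : ℚ)) ∧
      b n 0 s = (Nat.factorial (2 * n - 2 - s) : ℚ) * ((n : ℚ) - s) /
        (2 * (Nat.factorial (n - 1 - s) : ℚ)))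
    {s d : ℕ} (hs : 1 ≤ s) (hd : 1 ≤ d) : b (s + d + 1) s 0 = bClosed s d := by
  rw [(hbs0 _ _ hs (by omega)).1, show 2 * (s + d + 1) - 2 - s = s + 2 * d by omega,
    show s + d + 1 - 1 - s = d by omega, bClosed]
  push_cast
  ring

end

theorem stmt_4_general (a : ℕ → ℕ → ℚ) (b : ℕ → ℕ → ℕ → ℚ)
    (hak : ∀ n k, 2 ≤ k → k ≤ n - 1 → a n k =
      (Nat.choose (n - k + 2) 2 : ℚ) * (Nat.factorial (2 * n - k) : ℚ) /
        (2 * (Nat.factorial (n - k + 1) : ℚ)))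
    (hbs0 : ∀ n s, 1 ≤ s → s ≤ n - 2 →
      b n s 0 = (Nat.factorial (2 * n - 2 - s) : ℚ) * ((n : ℚ) - s) /
        (2 * (Nat.factorial (n - 1 - s) : ℚ)) ∧
      b n 0 s = (Nat.factorial (2 * n - 2 - s) : ℚ) * ((n : ℚ) - s) /
        (2 * (Nat.factorial (n - 1 - s) : ℚ))) :
    ∀ n k, 3 ≤ n → 2 ≤ k → k ≤ n - 2 →
      a n k = 2 * a n (k + 1) + ((k : ℚ) - 2) * a (n - 1) (k - 1) + 2 * b n (k - 1) 0 := by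
  intro n k hn hk hkn
  obtain ⟨j, rfl⟩ : ∃ j, k = j + 1 := ⟨k - 1, by omega⟩
  obtain ⟨e, rfl⟩ : ∃ e, n = j + 1 + (e + 1) := ⟨n - j - 2, by omega⟩
  have hnext : a (j + 1 + (e + 1)) (j + 1 + 1) = aClosed (j + 2) e := by
    rw [← a_eq_aClosed a hak (by omega) (by omega : 1 ≤ e)]; congr 1; omega
  have hprev : ((((j + 1 : ℕ)) : ℚ) - 2) * a (j + 1 + (e + 1) - 1) (j + 1 - 1) =
      ((j : ℚ) - 1) * aClosed j (e + 1) := by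
    rcases (by omega : j = 1 ∨ 2 ≤ j) with rfl | hj
    · norm_num
    · rw [show j + 1 + (e + 1) - 1 = j + (e + 1) by omega, Nat.add_sub_cancel,
        a_eq_aClosed a hak hj (by omega)]
      push_cast; ring
  have hb : b (j + 1 + (e + 1)) (j + 1 - 1) 0 = bClosed j (e + 1) := by
    rw [Nat.add_sub_cancel, ← b_eq_bClosed b hbs0 (by omega) (by omega : 1 ≤ e + 1)]; congr 1; omega
  rw [a_eq_aClosed a hak hk (by omega), hnext, hprev, hb]
  exact aClosed_recursion j e

/-- with the closed forms for a_{n,k} and b_{n,s,t}, for n ≥ 3 and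
2 ≤ k ≤ n-2 the recursion a_{n,k} = 2·a_{n,k+1} + (k-2)·a_{n-1,k-1} + 2·b_{n,k-1,0} holds. -/
theorem stmt_4 (a : ℕ → ℕ → ℚ) (b : ℕ → ℕ → ℕ → ℚ)
    (ha1 : ∀ n, 2 ≤ n → a n 1 =
      ((n : ℚ) + 2) * (Nat.factorial (2 * n - 2) : ℚ) / (2 * (Nat.factorial (n - 2) : ℚ)))
    (hak : ∀ n k, 2 ≤ k → k ≤ n - 1 → a n k =
      (Nat.choose (n - k + 2) 2 : ℚ) * (Nat.factorial (2 * n - k) : ℚ) /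
        (2 * (Nat.factorial (n - k + 1) : ℚ)))
    (han : ∀ n, a n n = (Nat.factorial n : ℚ))
    (hb00 : ∀ n, 2 ≤ n → b n 0 0 =
      (Nat.factorial (2 * n - 2) : ℚ) / (Nat.factorial (n - 2) : ℚ))
    (hbs0 : ∀ n s, 1 ≤ s → s ≤ n - 2 →
      b n s 0 = (Nat.factorial (2 * n - 2 - s) : ℚ) * ((n : ℚ) - s) /
        (2 * (Nat.factorial (n - 1 - s) : ℚ)) ∧
      b n 0 s = (Nat.factorial (2 * n - 2 - s) : ℚ) * ((n : ℚ) - s) /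
        (2 * (Nat.factorial (n - 1 - s) : ℚ)))
    (hbn1 : ∀ n, 1 ≤ n → b n (n - 1) 0 = (Nat.factorial (n - 1) : ℚ) ∧
      b n 0 (n - 1) = (Nat.factorial (n - 1) : ℚ))
    (hbst : ∀ n s t, 1 ≤ s → 1 ≤ t → s + t ≤ n - 1 →
      b n s t = (Nat.factorial (2 * n - 2 - s - t) : ℚ) *
        (((n - s - t) * (n - s - t + 1) + 2 : ℕ) : ℚ) /
        (4 * (Nat.factorial (n - s - t) : ℚ))) :
    ∀ n k, 3 ≤ n → 2 ≤ k → k ≤ n - 2 →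
      a n k = 2 * a n (k + 1) + ((k : ℚ) - 2) * a (n - 1) (k - 1) + 2 * b n (k - 1) 0 :=
  stmt_4_general a b hak hbs0
end

section
/- For integers m ≥ 2 and h ≥ 0, define t_{h} recursively by t_0 = 1 and t_h = (t_{h-1})^m · M(h) for h ≥ 1, where M(h) is the multinomial coefficient ( (m^{h+1}-1)/(m-1) - 1 )! / ( ((m^h - 1)/(m-1))! )^m. Then for all h ≥ 0, t_h = ∏_{j=1}^{h} α_j^{m^{h-j}}, where α_j = ( (m^{j+1}-m)/(m-1) )! / ( ((m^j - 1)/(m-1))! )^m. -/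
/-
The recursion `t h = t (h-1) ^ m * M h` unrolls to `t h = ∏_{j ≤ h} M j ^ m ^ (h - j)`, and
`M j = α j` because `(m^(j+1) - 1)/(m-1) - 1 = (m^(j+1) - m)/(m-1)`: subtracting `m - 1` from the
numerator lowers the quotient by one.
-/

theorem Nat.pow_succ_sub_div_sub_one (m k : ℕ) :
    (m ^ (k + 1) - m) / (m - 1) = (m ^ (k + 1) - 1) / (m - 1) - 1 := by
  rcases m with _ | m
  · simp
  · rw [← Nat.sub_mul_div, mul_one]
    congr 1
    have : m + 1 ≤ (m + 1) ^ (k + 1) := Nat.le_self_pow k.succ_ne_zero _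
    omega

theorem eq_prod_Icc_pow_of_eq_pow_mul {M : Type*} [CommMonoid M] (m : ℕ) {t a : ℕ → M}
    (h0 : t 0 = 1) (hsucc : ∀ n, t (n + 1) = t n ^ m * a (n + 1)) (h : ℕ) :
    t h = ∏ j ∈ Finset.Icc 1 h, a j ^ m ^ (h - j) := by
  induction h with
  | zero => simpa using h0
  | succ n ih =>
    rw [hsucc, ih, Finset.prod_Icc_succ_top (by omega), Nat.sub_self, pow_zero, pow_one,
      ← Finset.prod_pow]
    congr 1
    refine Finset.prod_congr rfl fun j hj => ?_
    rw [← pow_mul, ← pow_succ, Nat.sub_add_comm (Finset.mem_Icc.mp hj).2]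

theorem stmt_9_general (m : ℕ) (t : ℕ → ℚ)
    (ht0 : t 0 = 1)
    (hth : ∀ h, 1 ≤ h → t h = t (h - 1) ^ m *
      ((Nat.factorial ((m ^ (h + 1) - 1) / (m - 1) - 1) : ℚ) /
        (Nat.factorial ((m ^ h - 1) / (m - 1)) : ℚ) ^ m)) :
    ∀ h, t h = ∏ j ∈ Finset.Icc 1 h,
      ((Nat.factorial ((m ^ (j + 1) - m) / (m - 1)) : ℚ) /
        (Nat.factorial ((m ^ j - 1) / (m - 1)) : ℚ) ^ m) ^ (m ^ (h - j)) := by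
  refine eq_prod_Icc_pow_of_eq_pow_mul m ht0 fun n => ?_
  rw [hth (n + 1) n.succ_pos, Nat.add_sub_cancel, Nat.pow_succ_sub_div_sub_one]

/-- for m ≥ 2, with t_0 = 1 and t_h = t_{h-1}^m · M(h) where M(h) is the
multinomial coefficient ((m^{h+1}-1)/(m-1) - 1)! / (((m^h-1)/(m-1))!)^m, we have
t_h = ∏_{j=1}^h α_j^{m^{h-j}} with α_j = ((m^{j+1}-m)/(m-1))! / (((m^j-1)/(m-1))!)^m. -/
theorem stmt_9 (m : ℕ) (hm : 2 ≤ m) (t : ℕ → ℚ)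
    (ht0 : t 0 = 1)
    (hth : ∀ h, 1 ≤ h → t h = t (h - 1) ^ m *
      ((Nat.factorial ((m ^ (h + 1) - 1) / (m - 1) - 1) : ℚ) /
        (Nat.factorial ((m ^ h - 1) / (m - 1)) : ℚ) ^ m)) :
    ∀ h, t h = ∏ j ∈ Finset.Icc 1 h,
      ((Nat.factorial ((m ^ (j + 1) - m) / (m - 1)) : ℚ) /
        (Nat.factorial ((m ^ j - 1) / (m - 1)) : ℚ) ^ m) ^ (m ^ (h - j)) :=
  stmt_9_general m t ht0 hth
end

section
/- For integers n ≥ 2 and 1 ≤ s ≤ n-2, the identity (2n-2-s)!·(n-s)/(2·(n-1-s)!) = b holds where b is defined by the recursion b_{n,s} = a_{n-1,s+1} + b'_{n,s} + b_{n,s+1} + ∑_{q=1}^{s} C(2n-s-3, q-1)·(q-1)!·b_{n-q,s-q}, with a_{n,k} and b', b given by their closed forms: a_{n,k} = C(n-k+2,2)(2n-k)!/(2(n-k+1)!) for 2 ≤ k ≤ n-1, a_{n,n}=n!, b_{n,s} = (2n-2-s)!(n-s)/(2(n-1-s)!) for 1 ≤ s ≤ n-2, b_{n,n-1} = (n-1)!,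 b_{n,0} = (2n-2)!/(n-2)!, and b'_{n,s} = b_{n,s,1} = (2n-3-s)!·((n-s-1)(n-s)+2)/(4·(n-s-1)!) for 1 ≤ s ≤ n-2. Verify this recursion holds for all n ≥ 4 and 1 ≤ s ≤ n-3. -/
/-!
Write `s = t + 1` and `n = t + k + 3`, so that `N = 2n - s - 3 = t + 2k + 2` and `n - s = k + 2`.
Since `C(N, q - 1) (q - 1)! = N! / (N + 1 - q)!` and `b_{n-q, s-q, 0}` has the factor `(N + 1 - q)!`
in its numerator, each summand with `q < s` equals `N! (k + 2) / (2 (k + 1)!)`, independently of `q`,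
and the summand `q = s` equals `N! / k!`. After dividing by `N! / (k + 1)!` every term of the
recursion is a polynomial in `t` and `k`, and the recursion becomes a polynomial identity.
-/

open Nat Finset

theorem factorial_recursion_identity (t k : ℕ) :
    ((t + 2 * k + 3)! : ℚ) * (k + 2) / (2 * (k + 1)!) =
      ((k + 2).choose 2 : ℚ) * (t + 2 * k + 2)! / (2 * (k + 1)!) +
        (t + 2 * k + 2)! * ((k + 1) * (k + 2) + 2 : ℕ) / (4 * (k + 1)!) +
        (t + 2 * k + 2)! * (k + 1) / (2 * k !) +
        (t * ((t + 2 * k + 2)! * (k + 2) / (2 * (k + 1)!)) + (t + 2 * k + 2)! / k !) := by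
  rw [factorial_succ (t + 2 * k + 2), factorial_succ k, cast_choose_two]
  push_cast
  field_simp
  ring

theorem sum_Icc_choose_mul_factorial_mul_b (b : ℕ → ℕ → ℕ → ℚ)
    (hbs0 : ∀ n s, 1 ≤ s → s ≤ n - 2 →
      b n s 0 = ((2 * n - 2 - s)! : ℚ) * ((n : ℚ) - s) / (2 * ((n - 1 - s)! : ℚ)))
    (hb00 : ∀ n, 2 ≤ n → b n 0 0 = ((2 * n - 2)! : ℚ) / ((n - 2)! : ℚ))
    (t k : ℕ) :
    ∑ q ∈ Icc 1 (t + 1), ((2 * (t + k + 3) - (t + 1) - 3).choose (q - 1) : ℚ) * (q - 1)! *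
        b (t + k + 3 - q) (t + 1 - q) 0 =
      t * ((t + 2 * k + 2)! * (k + 2) / (2 * (k + 1)!)) + (t + 2 * k + 2)! / k ! := by
  have hterm : ∀ q ∈ Icc 1 t, ((t + 2 * k + 2).choose (q - 1) : ℚ) * (q - 1)! *
      b (t + k + 3 - q) (t + 1 - q) 0 = (t + 2 * k + 2)! * (k + 2) / (2 * (k + 1)!) := by
    intro q hq
    rw [mem_Icc] at hq
    rw [hbs0 _ _ (by omega) (by omega), cast_choose ℚ (show q - 1 ≤ t + 2 * k + 2 by omega),
      show 2 * (t + k + 3 - q) - 2 - (t + 1 - q) = t + 2 * k + 2 - (q - 1) by omega,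
      show t + k + 3 - q - 1 - (t + 1 - q) = k + 1 by omega,
      show t + k + 3 - q = t + 1 - q + (k + 2) by omega]
    push_cast
    field_simp
    ring
  have hlast : ((t + 2 * k + 2).choose t : ℚ) * t ! * b (k + 2) 0 0 = (t + 2 * k + 2)! / k ! := by
    rw [hb00 _ (by omega), cast_choose ℚ (show t ≤ t + 2 * k + 2 by omega),
      show 2 * (k + 2) - 2 = t + 2 * k + 2 - t by omega, show k + 2 - 2 = k by omega]
    field_simp
  rw [show 2 * (t + k + 3) - (t + 1) - 3 = t + 2 * k + 2 by omega, sum_Icc_succ_top (by omega),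
    sum_congr rfl hterm, sum_const, card_Icc, nsmul_eq_mul, show t + 1 - 1 = t by omega,
    show t + k + 3 - (t + 1) = k + 2 by omega, Nat.sub_self, hlast]

theorem stmt_12_general (a : ℕ → ℕ → ℚ) (b : ℕ → ℕ → ℕ → ℚ)
    (hak : ∀ n k, 2 ≤ k → k ≤ n - 1 → a n k =
      (Nat.choose (n - k + 2) 2 : ℚ) * (Nat.factorial (2 * n - k) : ℚ) /
        (2 * (Nat.factorial (n - k + 1) : ℚ)))
    (hbs0 : ∀ n s, 1 ≤ s → s ≤ n - 2 →
      b n s 0 = (Nat.factorial (2 * n - 2 - s) : ℚ) * ((n : ℚ) - s) /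
        (2 * (Nat.factorial (n - 1 - s) : ℚ)))
    (hb00 : ∀ n, 2 ≤ n → b n 0 0 =
      (Nat.factorial (2 * n - 2) : ℚ) / (Nat.factorial (n - 2) : ℚ))
    (hbs1 : ∀ n s, 1 ≤ s → s ≤ n - 2 →
      b n s 1 = (Nat.factorial (2 * n - 3 - s) : ℚ) *
        (((n - s - 1) * (n - s) + 2 : ℕ) : ℚ) / (4 * (Nat.factorial (n - s - 1) : ℚ))) :
    ∀ n s, 4 ≤ n → 1 ≤ s → s ≤ n - 3 →
      b n s 0 = a (n - 1) (s + 1) + b n s 1 + b n (s + 1) 0 +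
        ∑ q ∈ Finset.Icc 1 s,
          (Nat.choose (2 * n - s - 3) (q - 1) : ℚ) * (Nat.factorial (q - 1) : ℚ) *
            b (n - q) (s - q) 0 := by
  intro n s hn hs1 hs3
  obtain ⟨t, k, rfl, rfl⟩ : ∃ t k, s = t + 1 ∧ n = t + k + 3 :=
    ⟨s - 1, n - s - 2, by omega, by omega⟩
  rw [sum_Icc_choose_mul_factorial_mul_b b hbs0 hb00, hbs0 _ _ (by omega) (by omega),
    hak _ _ (by omega) (by omega), hbs1 _ _ (by omega) (by omega), hbs0 _ _ (by omega) (by omega)]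
  convert factorial_recursion_identity t k using 10 <;> first | omega | (push_cast; ring)

/-- with the stated closed forms, for n ≥ 4 and 1 ≤ s ≤ n-3 the recursion
b_{n,s,0} = a_{n-1,s+1} + b_{n,s,1} + b_{n,s+1,0} + ∑_{q=1}^s C(2n-s-3,q-1)(q-1)! b_{n-q,s-q,0}
holds. -/
theorem stmt_12 (a : ℕ → ℕ → ℚ) (b : ℕ → ℕ → ℕ → ℚ)
    (hak : ∀ n k, 2 ≤ k → k ≤ n - 1 → a n k =
      (Nat.choose (n - k + 2) 2 : ℚ) * (Nat.factorial (2 * n - k) : ℚ) /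
        (2 * (Nat.factorial (n - k + 1) : ℚ)))
    (han : ∀ n, a n n = (Nat.factorial n : ℚ))
    (hbs0 : ∀ n s, 1 ≤ s → s ≤ n - 2 →
      b n s 0 = (Nat.factorial (2 * n - 2 - s) : ℚ) * ((n : ℚ) - s) /
        (2 * (Nat.factorial (n - 1 - s) : ℚ)))
    (hbn1 : ∀ n, 1 ≤ n → b n (n - 1) 0 = (Nat.factorial (n - 1) : ℚ))
    (hb00 : ∀ n, 2 ≤ n → b n 0 0 =
      (Nat.factorial (2 * n - 2) : ℚ) / (Nat.factorial (n - 2) : ℚ))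
    (hbs1 : ∀ n s, 1 ≤ s → s ≤ n - 2 →
      b n s 1 = (Nat.factorial (2 * n - 3 - s) : ℚ) *
        (((n - s - 1) * (n - s) + 2 : ℕ) : ℚ) / (4 * (Nat.factorial (n - s - 1) : ℚ))) :
    ∀ n s, 4 ≤ n → 1 ≤ s → s ≤ n - 3 →
      b n s 0 = a (n - 1) (s + 1) + b n s 1 + b n (s + 1) 0 +
        ∑ q ∈ Finset.Icc 1 s,
          (Nat.choose (2 * n - s - 3) (q - 1) : ℚ) * (Nat.factorial (q - 1) : ℚ) *
            b (n - q) (s - q) 0 :=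
  stmt_12_general a b hak hbs0 hb00 hbs1
end
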